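/- arXiv:2004.04369 — 3 statements merged into one kernel-verified Lean document; each statement's English description precedes it below -/
import Mathlib

section
/- Let J be a nonzero real d×d matrix and G(J) the topological group with underlying space ℝ^d × ℝ and multiplication (v,t)·(u,s) = (v + exp(t·J)·u, t+s), and let N, M be discrete normal subgroups of G(J), with quotient maps q_N : G(J) → G(J)/N and q_M : G(J) → G(J)/M (quotient topology). Then: (a) for every topological group automorphism Φ of G(J) with Φ(N) = M, there is a well-defined topological group isomorphism Φ_{N,M} : G(J)/N → G(J)/M satisfying Φ_{N,M} ∘ q_N = q_M ∘ Φ; and (b) every topological group isomorphism Ψ : G(J)/N → G(J)/M arises in this way from a unique topological group automorphism Φ of G(J) with Φ(N) = M. -/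
open scoped Matrix
open NormedSpace

noncomputable section

/-- `S(A) = ∑_{n ≥ 0} Aⁿ/(n+1)!`, the power series with `A * S(A) = exp A - 1`. -/
def matS {d : ℕ} (A : Matrix (Fin d) (Fin d) ℝ) : Matrix (Fin d) (Fin d) ℝ :=
  ∑' n : ℕ, (((n + 1).factorial : ℝ))⁻¹ • A ^ n

/-- The almost Abelian group `G(J) = ℝ^d ⋊ ℝ` with multiplication
`(v,t)·(u,s) = (v + exp(tJ)u, t+s)`. -/
@[ext] structure GJ (d : ℕ) (J : Matrix (Fin d) (Fin d) ℝ) where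
  v : Fin d → ℝ
  t : ℝ

namespace GJ

variable {d : ℕ} {J : Matrix (Fin d) (Fin d) ℝ}

lemma exp_smul_add (a b : ℝ) (J : Matrix (Fin d) (Fin d) ℝ) :
    exp ((a + b) • J) = exp (a • J) * exp (b • J) := by
  rw [add_smul]
  exact Matrix.exp_add_of_commute _ _ (((Commute.refl J).smul_left a).smul_right b)

instance : Group (GJ d J) where
  mul p q := ⟨p.v + (exp (p.t • J)).mulVec q.v, p.t + q.t⟩
  one := ⟨0, 0⟩
  inv p := ⟨-(exp ((-p.t) • J)).mulVec p.v, -p.t⟩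
  mul_assoc a b c := by
    ext i
    · show (a.v + (exp (a.t • J)).mulVec b.v + (exp ((a.t + b.t) • J)).mulVec c.v) i = _
      show _ = (a.v + (exp (a.t • J)).mulVec (b.v + (exp (b.t • J)).mulVec c.v)) i
      rw [exp_smul_add, ← Matrix.mulVec_mulVec, Matrix.mulVec_add, add_assoc]
    · exact add_assoc a.t b.t c.t
  one_mul a := by
    ext i
    · show ((0 : Fin d → ℝ) + (exp ((0 : ℝ) • J)).mulVec a.v) i = a.v i
      rw [zero_smul, exp_zero, Matrix.one_mulVec, zero_add]
    · exact zero_add a.t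
  mul_one a := by
    ext i
    · show (a.v + (exp (a.t • J)).mulVec 0) i = a.v i
      rw [Matrix.mulVec_zero, add_zero]
    · exact add_zero a.t
  inv_mul_cancel a := by
    ext i
    · show (-(exp ((-a.t) • J)).mulVec a.v + (exp ((-a.t) • J)).mulVec a.v) i
        = (0 : Fin d → ℝ) i
      rw [neg_add_cancel]
    · exact neg_add_cancel a.t

/-- The topology of `G(J)` is that of the underlying space `ℝ^d × ℝ`. -/
instance : TopologicalSpace (GJ d J) :=
  TopologicalSpace.induced (fun g => (g.v, g.t)) inferInstance

lemma mul_def (p q : GJ d J) :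
    p * q = ⟨p.v + (exp (p.t • J)).mulVec q.v, p.t + q.t⟩ := rfl

end GJ

/-!
For a discrete subgroup `M` the quotient map `G → G/M` is a covering map, and `G(J)` is
homeomorphic to `ℝ^d × ℝ`, hence simply connected. So a continuous homomorphism
`G(J) → G(J)/M` lifts to a continuous map `G(J) → G(J)` fixing `1`; since lifts agreeing at
one point coincide, this lift is a homomorphism, and the lifts of `Ψ` and `Ψ⁻¹` are mutually
inverse.
-/

open QuotientGroup

section QuotientLift

variable {G H : Type*} [Group G] [TopologicalSpace G] [Group H] [TopologicalSpace H]

lemma QuotientGroup.continuous_congr (N : Subgroup G) (M : Subgroup H) [N.Normal] [M.Normal]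
    (Φ : G ≃* H) (hΦ : Continuous Φ) (hNM : N.map (Φ : G →* H) = M) :
    Continuous (congr N M Φ hNM) :=
  (isQuotientMap_mk N).continuous_iff.2 (continuous_mk.comp hΦ)

theorem QuotientGroup.exists_continuous_congr {N : Subgroup G} {M : Subgroup H} [N.Normal]
    [M.Normal] (Φ : G ≃* H) (hΦ : Continuous Φ) (hΦsymm : Continuous Φ.symm)
    (hNM : Φ '' (N : Set G) = (M : Set H)) :
    ∃ Ψ : (G ⧸ N) ≃* (H ⧸ M), Continuous Ψ ∧ Continuous Ψ.symm ∧
      ∀ g : G, Ψ (mk' N g) = mk' M (Φ g) := by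
  have hmap : N.map (Φ : G →* H) = M := SetLike.coe_injective hNM
  exact ⟨congr N M Φ hmap, continuous_congr N M Φ hΦ hmap,
    continuous_congr M N Φ.symm hΦsymm ((Subgroup.map_symm_eq_iff_map_eq _).2 hmap),
    congr_mk' N M Φ hmap⟩

variable [IsTopologicalGroup H] {M : Subgroup H}

lemma QuotientGroup.isCoveringMap_mk_of_discreteTopology (hM : DiscreteTopology M) :
    IsCoveringMap (mk : H → H ⧸ M) :=
  (M.isQuotientCoveringMap (SetLike.isDiscrete_iff_discreteTopology.2 hM)).isCoveringMap

lemma MonoidHom.eq_of_mk_comp_eq [PreconnectedSpace G] (hM : DiscreteTopology M)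
    {φ ψ : G →* H} (hφ : Continuous φ) (hψ : Continuous ψ)
    (h : ∀ g, (φ g : H ⧸ M) = ψ g) : φ = ψ :=
  DFunLike.coe_injective <| (isCoveringMap_mk_of_discreteTopology hM).eq_of_comp_eq
    hφ hψ (funext h) 1 (by rw [map_one, map_one])

theorem MonoidHom.exists_continuous_lift_mk [IsTopologicalGroup G] [SimplyConnectedSpace G]
    [LocallyPathConnectedSpace G] [M.Normal] (hM : DiscreteTopology M) (f : G →* H ⧸ M)
    (hf : Continuous f) :
    ∃ φ : G →* H, Continuous φ ∧ ∀ g, (φ g : H ⧸ M) = f g := by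
  have hcov := isCoveringMap_mk_of_discreteTopology hM
  obtain ⟨F, ⟨hF1, hFf⟩, -⟩ :=
    hcov.existsUnique_continuousMap_lifts ⟨f, hf⟩ 1 1
      (by rw [ContinuousMap.coe_mk, map_one]; rfl)
  have hFf' : ∀ g, (F g : H ⧸ M) = f g := congrFun hFf
  -- `(a, b) ↦ F (a * b)` and `(a, b) ↦ F a * F b` both lift `(a, b) ↦ f (a * b)`
  have hmul : (fun p : G × G => F (p.1 * p.2)) = fun p => F p.1 * F p.2 := by
    refine hcov.eq_of_comp_eq (by fun_prop) (by fun_prop) (funext fun p => ?_) (1, 1) ?_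
    · simp only [Function.comp_apply, mk_mul, hFf', map_mul]
    · simp only [mul_one, hF1]
  exact ⟨MonoidHom.mk' F fun a b => congrFun hmul (a, b), F.continuous, hFf'⟩

theorem QuotientGroup.existsUnique_lift_of_continuous_mulEquiv [IsTopologicalGroup G]
    [SimplyConnectedSpace G] [LocallyPathConnectedSpace G] [SimplyConnectedSpace H]
    [LocallyPathConnectedSpace H] {N : Subgroup G} [N.Normal] [M.Normal]
    (hN : DiscreteTopology N) (hM : DiscreteTopology M)
    (Ψ : (G ⧸ N) ≃* (H ⧸ M)) (hΨ : Continuous Ψ) (hΨsymm : Continuous Ψ.symm) :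
    ∃! Φ : G ≃* H, Continuous Φ ∧ Continuous Φ.symm ∧ Φ '' (N : Set G) = (M : Set H) ∧
      ∀ g : G, Ψ (mk' N g) = mk' M (Φ g) := by
  obtain ⟨φ, hφ, hφΨ⟩ :
      ∃ φ : G →* H, Continuous φ ∧ ∀ g, (φ g : H ⧸ M) = Ψ g :=
    MonoidHom.exists_continuous_lift_mk hM ((Ψ : G ⧸ N →* H ⧸ M).comp (mk' N))
      (hΨ.comp continuous_mk)
  obtain ⟨φ', hφ', hφ'Ψ⟩ :
      ∃ φ' : H →* G, Continuous φ' ∧ ∀ h, (φ' h : G ⧸ N) = Ψ.symm h :=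
    MonoidHom.exists_continuous_lift_mk hN ((Ψ.symm : H ⧸ M →* G ⧸ N).comp (mk' M))
      (hΨsymm.comp continuous_mk)
  have hφφ' : φ.comp φ' = MonoidHom.id H :=
    MonoidHom.eq_of_mk_comp_eq hM (hφ.comp hφ') continuous_id fun h => by
      rw [MonoidHom.comp_apply, hφΨ, hφ'Ψ, Ψ.apply_symm_apply, MonoidHom.id_apply]
  have hφ'φ : φ'.comp φ = MonoidHom.id G :=
    MonoidHom.eq_of_mk_comp_eq hN (hφ'.comp hφ) continuous_id fun g => by
      rw [MonoidHom.comp_apply, hφ'Ψ, hφΨ, Ψ.symm_apply_apply, MonoidHom.id_apply]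
  have hker : ∀ g, φ g ∈ M ↔ g ∈ N := fun g => by
    rw [← eq_one_iff, hφΨ, map_eq_one_iff _ Ψ.injective, eq_one_iff]
  let Φ : G ≃* H := MonoidHom.toMulEquiv φ φ' hφ'φ hφφ'
  refine ⟨Φ, ⟨hφ, hφ', ?_, fun g => (hφΨ g).symm⟩, ?_⟩
  · ext h
    rw [← Φ.apply_symm_apply h, Φ.injective.mem_set_image]
    exact (hker _).symm
  · rintro Φ₂ ⟨hΦ₂, -, -, hΦ₂Ψ⟩
    ext g
    have hΦ₂φ : Φ₂.toMonoidHom = φ := MonoidHom.eq_of_mk_comp_eq hM hΦ₂ hφ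
      fun g => (hΦ₂Ψ g).symm.trans (hφΨ g).symm
    exact DFunLike.congr_fun hΦ₂φ g

end QuotientLift

namespace GJ

variable {d : ℕ} {J : Matrix (Fin d) (Fin d) ℝ}

def coordHomeomorph : GJ d J ≃ₜ (Fin d → ℝ) × ℝ where
  toFun g := (g.v, g.t)
  invFun p := ⟨p.1, p.2⟩
  left_inv _ := rfl
  right_inv _ := rfl
  continuous_toFun := continuous_induced_dom
  continuous_invFun := continuous_induced_rng.2 continuous_id

lemma continuous_v : Continuous (v : GJ d J → Fin d → ℝ) :=
  continuous_fst.comp coordHomeomorph.continuous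

lemma continuous_t : Continuous (t : GJ d J → ℝ) :=
  continuous_snd.comp coordHomeomorph.continuous

lemma continuous_exp_smul (J : Matrix (Fin d) (Fin d) ℝ) :
    Continuous fun s : ℝ => exp (s • J) := by
  let : NormedRing (Matrix (Fin d) (Fin d) ℝ) := Matrix.linftyOpNormedRing
  let : NormedAlgebra ℝ (Matrix (Fin d) (Fin d) ℝ) := Matrix.linftyOpNormedAlgebra
  exact continuous_iff_continuousAt.2 fun s => (hasDerivAt_exp_smul_const J s).continuousAt

instance : IsTopologicalGroup (GJ d J) where
  continuous_mul := continuous_induced_rng.2 <|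
    ((continuous_v.comp continuous_fst).add
      (((continuous_exp_smul J).comp (continuous_t.comp continuous_fst)).matrix_mulVec
        (continuous_v.comp continuous_snd))).prodMk
    ((continuous_t.comp continuous_fst).add (continuous_t.comp continuous_snd))
  continuous_inv := continuous_induced_rng.2 <|
    (((continuous_exp_smul J).comp continuous_t.neg).matrix_mulVec continuous_v).neg.prodMk
      continuous_t.neg

instance : SimplyConnectedSpace (GJ d J) :=
  have := coordHomeomorph.contractibleSpace (X := GJ d J)
  inferInstance

instance : LocallyPathConnectedSpace (GJ d J) :=
  coordHomeomorph.isOpenEmbedding.locallyPathConnectedSpace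

end GJ

theorem GJ.quotient_iso_iff_automorphism_general (d : ℕ) (J : Matrix (Fin d) (Fin d) ℝ)
    (N M : Subgroup (GJ d J)) [N.Normal] [M.Normal]
    (hdN : DiscreteTopology N) (hdM : DiscreteTopology M) :
    (∀ Φ : GJ d J ≃* GJ d J, Continuous Φ → Continuous Φ.symm →
      Φ '' (N : Set (GJ d J)) = (M : Set (GJ d J)) →
      ∃ Ψ : (GJ d J ⧸ N) ≃* (GJ d J ⧸ M), Continuous Ψ ∧ Continuous Ψ.symm ∧
        ∀ g : GJ d J, Ψ (QuotientGroup.mk' N g) = QuotientGroup.mk' M (Φ g)) ∧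
    (∀ Ψ : (GJ d J ⧸ N) ≃* (GJ d J ⧸ M), Continuous Ψ → Continuous Ψ.symm →
      ∃! Φ : GJ d J ≃* GJ d J, Continuous Φ ∧ Continuous Φ.symm ∧
        Φ '' (N : Set (GJ d J)) = (M : Set (GJ d J)) ∧
        ∀ g : GJ d J, Ψ (QuotientGroup.mk' N g) = QuotientGroup.mk' M (Φ g)) :=
  ⟨fun Φ hΦ hΦsymm hNM => exists_continuous_congr Φ hΦ hΦsymm hNM,
    fun Ψ hΨ hΨsymm => existsUnique_lift_of_continuous_mulEquiv hdN hdM Ψ hΨ hΨsymm⟩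

/-- Isomorphisms between quotients of `G(J)` by discrete normal subgroups: every automorphism
`Φ` of `G(J)` with `Φ(N) = M` descends to a topological group isomorphism
`G(J)/N → G(J)/M`, and every topological group isomorphism `G(J)/N → G(J)/M` arises this way
from a unique such automorphism. -/
theorem GJ.quotient_iso_iff_automorphism (d : ℕ) (J : Matrix (Fin d) (Fin d) ℝ) (hJ : J ≠ 0)
    (N M : Subgroup (GJ d J)) [N.Normal] [M.Normal]
    (hdN : DiscreteTopology N) (hdM : DiscreteTopology M) :
    (∀ Φ : GJ d J ≃* GJ d J, Continuous Φ → Continuous Φ.symm →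
      Φ '' (N : Set (GJ d J)) = (M : Set (GJ d J)) →
      ∃ Ψ : (GJ d J ⧸ N) ≃* (GJ d J ⧸ M), Continuous Ψ ∧ Continuous Ψ.symm ∧
        ∀ g : GJ d J, Ψ (QuotientGroup.mk' N g) = QuotientGroup.mk' M (Φ g)) ∧
    (∀ Ψ : (GJ d J ⧸ N) ≃* (GJ d J ⧸ M), Continuous Ψ → Continuous Ψ.symm →
      ∃! Φ : GJ d J ≃* GJ d J, Continuous Φ ∧ Continuous Φ.symm ∧
        Φ '' (N : Set (GJ d J)) = (M : Set (GJ d J)) ∧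
        ∀ g : GJ d J, Ψ (QuotientGroup.mk' N g) = QuotientGroup.mk' M (Φ g)) :=
  GJ.quotient_iso_iff_automorphism_general d J N M hdN hdM
end
end

section
/- Let J be a nonzero real d×d matrix and G(J) the topological group with underlying space ℝ^d × ℝ and multiplication (v,t)·(u,s) = (v + exp(t·J)·u, t+s). Let N be a discrete subgroup of the center of G(J). Then there exists a topological group automorphism Φ of G(J) such that the subgroup M = Φ(N) satisfies: for every (v,t) ∈ M, both (v,0) ∈ M and (0,t) ∈ M; i.e., M is the internal direct product of M ∩ (ℝ^d × {0}) and M ∩ ({0} × ℝ). -/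
open scoped Matrix
open NormedSpace

noncomputable section

/-! A central element `(u, s)` has `exp (s • J) = 1`, and for `J ≠ 0` the closed subgroup
`{s | exp (s • J) = 1}` of `ℝ` is proper, so the `t`-components of `N` form a cyclic group `ℤ a`,
generated by the `t`-component of some `(w, a) ∈ N`. Since `w` is fixed by every `exp (t • J)`,
the shear `(v, t) ↦ (v - (t / a) • w, t)` is a homeomorphic automorphism; it sends `(w, a) ^ m` to
`(0, m a)`, and `(v, t) * (0, t)⁻¹ = (v, 0)` gives the other half of the splitting. -/

theorem AddSubgroup.exists_eq_zmultiples_of_subset_isClosed {G : Type*} [AddCommGroup G]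
    [LinearOrder G] [IsOrderedAddMonoid G] [TopologicalSpace G] [OrderTopology G] [Archimedean G]
    {S : AddSubgroup G} {C : Set G} (hC : IsClosed C) (hC_ne : C ≠ Set.univ) (hSC : ↑S ⊆ C) :
    ∃ a, S = AddSubgroup.zmultiples a := by
  rcases S.dense_or_cyclic with hdense | ⟨a, rfl⟩
  · exact absurd (Set.eq_univ_of_univ_subset (hdense.closure_eq ▸ hC.closure_subset_iff.2 hSC))
      hC_ne
  · exact ⟨a, (AddSubgroup.zmultiples_eq_closure a).symm⟩

namespace Matrix

variable {d : ℕ}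

theorem continuous_exp_smul (J : Matrix (Fin d) (Fin d) ℝ) :
    Continuous fun s : ℝ => exp (s • J) := by
  let _ : NormedRing (Matrix (Fin d) (Fin d) ℝ) := Matrix.linftyOpNormedRing
  let _ : NormedAlgebra ℝ (Matrix (Fin d) (Fin d) ℝ) := Matrix.linftyOpNormedAlgebra
  exact continuous_iff_continuousAt.2 fun s => (hasDerivAt_exp_smul_const J s).continuousAt

theorem exists_exp_smul_ne_one {J : Matrix (Fin d) (Fin d) ℝ} (hJ : J ≠ 0) :
    ∃ s : ℝ, exp (s • J) ≠ 1 := by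
  let _ : NormedRing (Matrix (Fin d) (Fin d) ℝ) := Matrix.linftyOpNormedRing
  let _ : NormedAlgebra ℝ (Matrix (Fin d) (Fin d) ℝ) := Matrix.linftyOpNormedAlgebra
  by_contra! h
  have hderiv := hasDerivAt_exp_smul_const J (0 : ℝ)
  rw [zero_smul, exp_zero, one_mul] at hderiv
  exact hJ (hderiv.unique ((hasDerivAt_const (0 : ℝ) 1).congr_of_eventuallyEq
    (.of_forall fun s => h s)))

end Matrix

namespace GJ

variable {d : ℕ} {J : Matrix (Fin d) (Fin d) ℝ}

theorem continuous_mk {X : Type*} [TopologicalSpace X] {f : X → Fin d → ℝ} {g : X → ℝ}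
    (hf : Continuous f) (hg : Continuous g) : Continuous fun x => (⟨f x, g x⟩ : GJ d J) :=
  continuous_induced_rng.2 (hf.prodMk hg)

theorem continuous_toProd : Continuous fun p : GJ d J => (p.v, p.t) :=
  continuous_induced_dom

theorem continuous_v_s14 : Continuous fun p : GJ d J => p.v :=
  continuous_fst.comp continuous_toProd

theorem continuous_t_s14 : Continuous fun p : GJ d J => p.t :=
  continuous_snd.comp continuous_toProd

theorem one_def : (1 : GJ d J) = ⟨0, 0⟩ := rfl

theorem inv_def (p : GJ d J) : p⁻¹ = ⟨-(exp ((-p.t) • J) *ᵥ p.v), -p.t⟩ := rfl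

theorem mk_mul_inv_mk_zero (v : Fin d → ℝ) (t : ℝ) :
    (⟨v, t⟩ : GJ d J) * (⟨0, t⟩ : GJ d J)⁻¹ = ⟨v, 0⟩ := by
  simp [mul_def, inv_def]

theorem mk_v_zero_mem {M : Subgroup (GJ d J)} {g : GJ d J} (hg : g ∈ M)
    (hg_t : (⟨0, g.t⟩ : GJ d J) ∈ M) : (⟨g.v, 0⟩ : GJ d J) ∈ M :=
  mk_mul_inv_mk_zero (J := J) g.v g.t ▸ M.mul_mem hg (M.inv_mem hg_t)

theorem exp_smul_mulVec_of_mem_center {p : GJ d J} (hp : p ∈ Subgroup.center (GJ d J))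
    (t : ℝ) : exp (t • J) *ᵥ p.v = p.v := by
  have hcomm := congrArg GJ.v ((Subgroup.mem_center_iff.1 hp) ⟨0, t⟩)
  simpa [mul_def] using hcomm

theorem exp_smul_eq_one_of_mem_center {p : GJ d J} (hp : p ∈ Subgroup.center (GJ d J)) :
    exp (p.t • J) = 1 := by
  refine Matrix.ext_iff_mulVec.2 fun v => ?_
  have hcomm := congrArg GJ.v ((Subgroup.mem_center_iff.1 hp) ⟨v, 0⟩)
  simp only [mul_def, zero_smul, exp_zero, Matrix.one_mulVec] at hcomm
  rw [add_comm v] at hcomm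
  simpa using (add_left_cancel hcomm).symm

def timeSubgroup (N : Subgroup (GJ d J)) : AddSubgroup ℝ where
  carrier := {s | ∃ u, (⟨u, s⟩ : GJ d J) ∈ N}
  zero_mem' := ⟨0, N.one_mem⟩
  add_mem' := by
    rintro s s' ⟨u, hu⟩ ⟨u', hu'⟩
    exact ⟨_, N.mul_mem hu hu'⟩
  neg_mem' := by
    rintro s ⟨u, hu⟩
    exact ⟨_, N.inv_mem hu⟩

theorem timeSubgroup_subset {N : Subgroup (GJ d J)} (hN : N ≤ Subgroup.center (GJ d J)) :
    ↑(timeSubgroup N) ⊆ {s : ℝ | exp (s • J) = 1} := by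
  rintro s ⟨u, hu⟩
  exact exp_smul_eq_one_of_mem_center (hN hu)

section Shear

variable {w : Fin d → ℝ} (hw : ∀ t : ℝ, exp (t • J) *ᵥ w = w)

def shear (hw : ∀ t : ℝ, exp (t • J) *ᵥ w = w) : GJ d J ≃* GJ d J where
  toFun p := ⟨p.v - p.t • w, p.t⟩
  invFun p := ⟨p.v + p.t • w, p.t⟩
  left_inv p := by simp
  right_inv p := by simp
  map_mul' p q := by
    refine GJ.ext ?_ rfl
    simp only [mul_def, Matrix.mulVec_sub, Matrix.mulVec_smul, hw, add_smul]
    abel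

theorem shear_apply (p : GJ d J) : shear hw p = ⟨p.v - p.t • w, p.t⟩ := rfl

theorem continuous_shear : Continuous (shear hw) :=
  continuous_mk (continuous_v_s14.sub (continuous_t_s14.smul continuous_const)) continuous_t_s14

theorem continuous_shear_symm : Continuous (shear hw).symm :=
  continuous_mk (continuous_v_s14.add (continuous_t_s14.smul continuous_const)) continuous_t_s14

def lineHom (hw : ∀ t : ℝ, exp (t • J) *ᵥ w = w) : Multiplicative ℝ →* GJ d J where
  toFun s := ⟨s.toAdd • w, s.toAdd⟩
  map_one' := by ext <;> simp [one_def]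
  map_mul' s s' := by
    ext
    · simp only [mul_def, toAdd_mul, add_smul, Matrix.mulVec_smul, hw]
    · rfl

theorem lineHom_apply (s : Multiplicative ℝ) : lineHom hw s = ⟨s.toAdd • w, s.toAdd⟩ := rfl

theorem shear_lineHom (s : Multiplicative ℝ) : shear hw (lineHom hw s) = ⟨0, s.toAdd⟩ := by
  simp [shear_apply, lineHom_apply]

end Shear

end GJ

theorem GJ.discrete_central_subgroup_split_general (d : ℕ) (J : Matrix (Fin d) (Fin d) ℝ)
    (hJ : J ≠ 0) (N : Subgroup (GJ d J)) (hN : N ≤ Subgroup.center (GJ d J)) :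
    ∃ Φ : GJ d J ≃* GJ d J, Continuous Φ ∧ Continuous Φ.symm ∧
      ∀ g ∈ Subgroup.map Φ.toMonoidHom N,
        (⟨g.v, 0⟩ : GJ d J) ∈ Subgroup.map Φ.toMonoidHom N ∧
        (⟨0, g.t⟩ : GJ d J) ∈ Subgroup.map Φ.toMonoidHom N := by
  obtain ⟨a, ha⟩ := AddSubgroup.exists_eq_zmultiples_of_subset_isClosed
    (isClosed_eq (Matrix.continuous_exp_smul J) continuous_const)
    ((Set.ne_univ_iff_exists_notMem _).2 (Matrix.exists_exp_smul_ne_one hJ))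
    (timeSubgroup_subset hN)
  obtain ⟨w, hw⟩ : a ∈ timeSubgroup N := ha ▸ AddSubgroup.mem_zmultiples a
  have hfix (t : ℝ) : exp (t • J) *ᵥ (a⁻¹ • w) = a⁻¹ • w := by
    rw [Matrix.mulVec_smul, exp_smul_mulVec_of_mem_center (hN hw)]
  have hgen : lineHom hfix (.ofAdd a) ∈ N := by
    rcases eq_or_ne a 0 with rfl | ha0
    · simp
    · simpa [lineHom_apply, smul_smul, ha0] using hw
  have ht_mem (n : GJ d J) (hn : n ∈ N) :
      (⟨0, n.t⟩ : GJ d J) ∈ N.map (shear hfix).toMonoidHom := by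
    have hnt : n.t ∈ AddSubgroup.zmultiples a := ha ▸ ⟨n.v, hn⟩
    obtain ⟨m, hm⟩ := AddSubgroup.mem_zmultiples_iff.1 hnt
    refine ⟨lineHom hfix (.ofAdd a) ^ m, N.zpow_mem hgen m, ?_⟩
    rw [MulEquiv.coe_toMonoidHom, ← map_zpow, ← ofAdd_zsmul, hm]
    exact shear_lineHom hfix _
  refine ⟨shear hfix, continuous_shear hfix, continuous_shear_symm hfix, ?_⟩
  rintro _ ⟨n, hn, rfl⟩
  exact ⟨mk_v_zero_mem ⟨n, hn, rfl⟩ (ht_mem n hn), ht_mem n hn⟩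

/-- Every discrete central subgroup `N` of `G(J)` can be mapped by an automorphism of `G(J)`
onto a subgroup `M` that splits as the internal direct product of `M ∩ (ℝ^d × {0})` and
`M ∩ ({0} × ℝ)`. -/
theorem GJ.discrete_central_subgroup_split (d : ℕ) (J : Matrix (Fin d) (Fin d) ℝ)
    (hJ : J ≠ 0) (N : Subgroup (GJ d J)) (hN : N ≤ Subgroup.center (GJ d J))
    (hdisc : DiscreteTopology N) :
    ∃ Φ : GJ d J ≃* GJ d J, Continuous Φ ∧ Continuous Φ.symm ∧
      ∀ g ∈ Subgroup.map Φ.toMonoidHom N,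
        (⟨g.v, 0⟩ : GJ d J) ∈ Subgroup.map Φ.toMonoidHom N ∧
        (⟨0, g.t⟩ : GJ d J) ∈ Subgroup.map Φ.toMonoidHom N :=
  GJ.discrete_central_subgroup_split_general d J hJ N hN
end
end

section
/- Let J be a real d×d matrix and G(J) the topological group with underlying space ℝ^d × ℝ and multiplication (v,t)·(u,s) = (v + exp(t·J)·u, t+s). Let W ⊆ ℝ^d be a linear subspace with J·W ⊆ W and let v₀ ∈ ℝ^d. Then the set H = {(w + t·S(t·J)·v₀, t) : w ∈ W, t ∈ ℝ}, where S(A) = Σ_{n≥0} Aⁿ/(n+1)!, is a subgroup of G(J), and H is a closed subset of ℝ^d × ℝ. -/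
open scoped Matrix
open NormedSpace

noncomputable section

/-!
Write `φ t = t S(tJ) v₀`. The last column of `exp (t [[J, v₀], [0, 0]])` is `(φ t, 1)`, so comparing
last columns in `exp ((t + s) M) = exp (t M) exp (s M)` gives the cocycle identity
`φ (t + s) = φ t + exp (tJ) φ s`. Hence `g ↦ g.v - φ g.t` is a continuous crossed homomorphism
from `G(J)` to `ℝ^d`, and `H` is the preimage of the `exp (tJ)`-invariant subspace `W` under it.
-/

open Matrix

theorem HasSum.matrix_fromBlocks {X R l m n o : Type*} [AddCommMonoid R] [TopologicalSpace R]
    {f : X → Matrix n l R} {g : X → Matrix n m R} {h : X → Matrix o l R} {k : X → Matrix o m R}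
    {A : Matrix n l R} {B : Matrix n m R} {C : Matrix o l R} {D : Matrix o m R}
    (hA : HasSum f A) (hB : HasSum g B) (hC : HasSum h C) (hD : HasSum k D) :
    HasSum (fun x => fromBlocks (f x) (g x) (h x) (k x)) (fromBlocks A B C D) := by
  refine Pi.hasSum.2 fun i => Pi.hasSum.2 fun j => ?_
  rcases i with i | i <;> rcases j with j | j
  · exact Pi.hasSum.1 (Pi.hasSum.1 hA i) j
  · exact Pi.hasSum.1 (Pi.hasSum.1 hB i) j
  · exact Pi.hasSum.1 (Pi.hasSum.1 hC i) j
  · exact Pi.hasSum.1 (Pi.hasSum.1 hD i) j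

lemma Matrix.fromBlocks_zero_zero_pow_succ {R n m : Type*} [Semiring R] [Fintype n] [DecidableEq n]
    [Fintype m] [DecidableEq m] (A : Matrix n n R) (B : Matrix n m R) (k : ℕ) :
    fromBlocks A B (0 : Matrix m n R) 0 ^ (k + 1) = fromBlocks (A ^ (k + 1)) (A ^ k * B) 0 0 := by
  induction k with
  | zero => simp
  | succ k ih => rw [pow_succ, ih, fromBlocks_multiply, pow_succ A (k + 1)]; simp

section

attribute [local instance] Matrix.linftyOpNormedRing Matrix.linftyOpNormedAlgebra

variable {d : ℕ}

lemma hasSum_matS (A : Matrix (Fin d) (Fin d) ℝ) :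
    HasSum (fun n : ℕ => ((n + 1).factorial : ℝ)⁻¹ • A ^ n) (matS A) := by
  refine Summable.hasSum (.of_norm_bounded (norm_expSeries_summable' (𝕂 := ℝ) A) fun n => ?_)
  rw [norm_smul, norm_smul]
  gcongr
  rw [norm_inv, norm_inv, Real.norm_natCast, Real.norm_natCast]
  gcongr
  exact Nat.le_succ n

lemma Matrix.exp_fromBlocks_zero_zero {m : Type*} [Fintype m] [DecidableEq m]
    (A : Matrix (Fin d) (Fin d) ℝ) (B : Matrix (Fin d) m ℝ) :
    exp (fromBlocks A B (0 : Matrix m (Fin d) ℝ) 0) = fromBlocks (exp A) (matS A * B) 0 1 := by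
  have hA : HasSum (fun n : ℕ => ((n + 1).factorial : ℝ)⁻¹ • A ^ (n + 1)) (exp A - 1) := by
    have := (hasSum_nat_add_iff' 1).2 (exp_series_hasSum_exp' (𝕂 := ℝ) A)
    simp only [Finset.range_one, Finset.sum_singleton, pow_zero, Nat.factorial_zero, Nat.cast_one,
      inv_one, one_smul] at this
    exact this
  have hB : HasSum (fun n : ℕ => ((n + 1).factorial : ℝ)⁻¹ • (A ^ n * B)) (matS A * B) := by
    simpa [Function.comp_def, smul_mul_assoc] using
      (hasSum_matS A).map (mulRightLinearMap (Fin d) ℝ B)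
        (continuous_id.matrix_mul continuous_const)
  set M := fromBlocks A B (0 : Matrix m (Fin d) ℝ) 0
  have hsucc : HasSum (fun n : ℕ => ((n + 1).factorial : ℝ)⁻¹ • M ^ (n + 1))
      (fromBlocks (exp A - 1) (matS A * B) 0 0) := by
    convert hA.matrix_fromBlocks hB hasSum_zero hasSum_zero using 1
    ext1 n
    simp only [M, fromBlocks_zero_zero_pow_succ, fromBlocks_smul, smul_zero]
  have hexp := HasSum.zero_add (f := fun n : ℕ => (n.factorial : ℝ)⁻¹ • M ^ n) hsucc
  rw [Nat.factorial_zero, Nat.cast_one, inv_one, one_smul, pow_zero, ← fromBlocks_one,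
    fromBlocks_add, add_sub_cancel, add_zero, zero_add, add_zero] at hexp
  exact (exp_series_hasSum_exp' (𝕂 := ℝ) M).unique hexp

lemma Matrix.continuous_exp_smul_s17 {m : Type*} [Fintype m] [DecidableEq m] (M : Matrix m m ℝ) :
    Continuous fun t : ℝ => exp (t • M) :=
  exp_continuous.comp (continuous_id.smul continuous_const)

end

def Submodule.stabilizerSubalgebra {n : Type*} [Fintype n] [DecidableEq n]
    (W : Submodule ℝ (n → ℝ)) : Subalgebra ℝ (Matrix n n ℝ) where
  carrier := {A | ∀ w ∈ W, A *ᵥ w ∈ W}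
  mul_mem' hA hB w hw := by
    rw [← mulVec_mulVec]
    exact hA _ (hB w hw)
  add_mem' hA hB w hw := by
    rw [add_mulVec]
    exact W.add_mem (hA w hw) (hB w hw)
  algebraMap_mem' c w hw := by
    rw [Algebra.algebraMap_eq_smul_one, smul_mulVec, one_mulVec]
    exact W.smul_mem c hw

lemma Submodule.isClosed_stabilizerSubalgebra {n : Type*} [Fintype n] [DecidableEq n]
    (W : Submodule ℝ (n → ℝ)) : IsClosed (W.stabilizerSubalgebra : Set (Matrix n n ℝ)) := by
  have h : (W.stabilizerSubalgebra : Set (Matrix n n ℝ)) = ⋂ w ∈ W, (· *ᵥ w) ⁻¹' W := by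
    ext A
    simp [stabilizerSubalgebra]
  rw [h]
  exact isClosed_biInter fun w _ =>
    W.closed_of_finiteDimensional.preimage (continuous_id.matrix_mulVec continuous_const)

lemma Submodule.exp_smul_mulVec_mem {n : Type*} [Fintype n] [DecidableEq n]
    {W : Submodule ℝ (n → ℝ)} {J : Matrix n n ℝ} (hW : ∀ w ∈ W, J *ᵥ w ∈ W) (t : ℝ)
    {w : n → ℝ} (hw : w ∈ W) : exp (t • J) *ᵥ w ∈ W := by
  have hJ : J ∈ W.stabilizerSubalgebra := hW
  exact exp_mem (R := ℝ) W.isClosed_stabilizerSubalgebra (Subalgebra.smul_mem _ hJ t) w hw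

namespace GJ

variable {d : ℕ} (J : Matrix (Fin d) (Fin d) ℝ) (v₀ : Fin d → ℝ)

def drift (t : ℝ) : Fin d → ℝ := t • (matS (t • J) *ᵥ v₀)

lemma exp_smul_fromBlocks_replicateCol (t : ℝ) :
    exp (t • fromBlocks J (replicateCol Unit v₀) (0 : Matrix Unit (Fin d) ℝ) 0) =
      fromBlocks (exp (t • J)) (replicateCol Unit (drift J v₀ t)) 0 1 := by
  rw [fromBlocks_smul, smul_zero, smul_zero, exp_fromBlocks_zero_zero, drift, replicateCol_smul,
    replicateCol_mulVec, Matrix.mul_smul]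

lemma drift_add (t s : ℝ) :
    drift J v₀ (t + s) = drift J v₀ t + exp (t • J) *ᵥ drift J v₀ s := by
  set M := fromBlocks J (replicateCol Unit v₀) (0 : Matrix Unit (Fin d) ℝ) 0
  have hexp : exp ((t + s) • M) = exp (t • M) * exp (s • M) := by
    rw [add_smul]
    exact Matrix.exp_add_of_commute _ _ (((Commute.refl M).smul_left t).smul_right s)
  have h12 := congrArg toBlocks₁₂ hexp
  simp only [M, exp_smul_fromBlocks_replicateCol, fromBlocks_multiply, toBlocks_fromBlocks₁₂,
    Matrix.mul_one, ← replicateCol_mulVec, ← replicateCol_add] at h12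
  rw [add_comm (drift J v₀ t)]
  exact funext fun i => congrFun (congrFun h12 i) ()

lemma continuous_drift : Continuous (drift J v₀) := by
  refine continuous_pi fun i => ?_
  have h : (fun t => drift J v₀ t i) =
      fun t => exp (t • fromBlocks J (replicateCol Unit v₀) (0 : Matrix Unit (Fin d) ℝ) 0)
        (.inl i) (.inr ()) := by
    ext t
    rw [exp_smul_fromBlocks_replicateCol]
    rfl
  rw [h]
  exact (continuous_exp_smul_s17 _).matrix_elem _ _

def defect (g : GJ d J) : Fin d → ℝ := g.v - drift J v₀ g.t

lemma defect_one : defect J v₀ 1 = 0 := by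
  simp [defect, drift, show (1 : GJ d J) = ⟨0, 0⟩ from rfl]

lemma defect_mul (g h : GJ d J) :
    defect J v₀ (g * h) = defect J v₀ g + exp (g.t • J) *ᵥ defect J v₀ h := by
  rw [mul_def, defect, defect, defect, drift_add, mulVec_sub]
  ext i
  simp only [Pi.add_apply, Pi.sub_apply]
  ring

variable (W : Submodule ℝ (Fin d → ℝ)) (hW : ∀ w ∈ W, J *ᵥ w ∈ W)

def driftSubgroup : Subgroup (GJ d J) where
  carrier := {g | defect J v₀ g ∈ W}
  one_mem' := by
    rw [Set.mem_ofPred_eq, defect_one]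
    exact W.zero_mem
  mul_mem' {g h} hg hh := by
    rw [Set.mem_ofPred_eq, defect_mul]
    exact W.add_mem hg (W.exp_smul_mulVec_mem hW _ hh)
  inv_mem' {g} hg := by
    have h := defect_mul J v₀ g⁻¹ g
    rw [inv_mul_cancel, defect_one, eq_comm, add_eq_zero_iff_eq_neg] at h
    rw [Set.mem_ofPred_eq, h]
    exact W.neg_mem (W.exp_smul_mulVec_mem hW _ hg)

lemma coe_driftSubgroup : (driftSubgroup J v₀ W hW : Set (GJ d J)) =
    {g | ∃ w ∈ W, ∃ t : ℝ, g = ⟨w + drift J v₀ t, t⟩} := by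
  ext g
  constructor
  · intro hg
    exact ⟨defect J v₀ g, hg, g.t, by ext <;> simp [defect]⟩
  · rintro ⟨w, hw, t, rfl⟩
    simpa [driftSubgroup, defect] using hw

lemma isClosed_image_driftSubgroup :
    IsClosed ((fun g : GJ d J => (g.v, g.t)) '' driftSubgroup J v₀ W hW) := by
  rw [Set.image_eq_preimage_of_inverse (g := fun p => (⟨p.1, p.2⟩ : GJ d J)) (fun _ => rfl)
    (fun _ => rfl)]
  exact W.closed_of_finiteDimensional.preimage
    (continuous_fst.sub ((continuous_drift J v₀).comp continuous_snd))

end GJ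

/-- For a `J`-invariant subspace `W ⊆ ℝ^d` and `v₀ ∈ ℝ^d`, the set
`H = {(w + t·S(tJ)·v₀, t) : w ∈ W, t ∈ ℝ}` is a subgroup of `G(J)` and is closed as a subset
of the underlying space `ℝ^d × ℝ`. -/
theorem GJ.connected_subgroup_closed (d : ℕ) (J : Matrix (Fin d) (Fin d) ℝ)
    (W : Submodule ℝ (Fin d → ℝ)) (hW : ∀ w ∈ W, J.mulVec w ∈ W) (v₀ : Fin d → ℝ) :
    let H : Set (GJ d J) :=
      {g | ∃ w ∈ W, ∃ t : ℝ, g = ⟨w + t • (matS (t • J)).mulVec v₀, t⟩}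
    (∃ H' : Subgroup (GJ d J), (H' : Set (GJ d J)) = H) ∧
      IsClosed ((fun g : GJ d J => (g.v, g.t)) '' H) := by
  intro H
  have hH : (driftSubgroup J v₀ W hW : Set (GJ d J)) = H := coe_driftSubgroup J v₀ W hW
  exact ⟨⟨_, hH⟩, hH ▸ isClosed_image_driftSubgroup J v₀ W hW⟩
end
end
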